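/- arXiv:0710.0688 — 3 statements merged into one kernel-verified Lean document; each statement's English description precedes it below -/
import Mathlib

section
/- With I₂ = log F(s) − 4b, I₃ = e^{−b} F₁(s) − 8a, and I₄ = F₂(s), where F₁ = F'/F and F₂ = (F₁' − F₁²/8)/√F, the exterior derivative satisfies dI₃ = −2 I₃ θ̃¹ − 8 θ̃² + (I₃²/8 + e^{I₂/2} I₄) θ̃³, where θ̃¹ = db/2 − a e^b ds, θ̃² = da + a db − a² e^b ds, θ̃³ = e^b ds. -/
/-- Coefficients of the coframe `θ̃¹, θ̃², θ̃³, θ̃⁴` with respect to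
`(da, db, ds, dt)`, coordinates `(a,b,s,t) = (x 0, x 1, x 2, x 3)`. -/
noncomputable def coframe (F : ℝ → ℝ) (x : Fin 4 → ℝ) : Fin 4 → Fin 4 → ℝ :=
  ![![0, 1 / 2, -(x 0) * Real.exp (x 1), 0],
    ![1, x 0, -(x 0) ^ 2 * Real.exp (x 1), 0],
    ![0, 0, Real.exp (x 1), 0],
    ![0, 0, Real.exp (-3 * x 1) * (F (x 2) - 6 * (x 0) * Real.exp (x 1) * (x 3)),
      Real.exp (-3 * x 1)]]

/-- Pairing of a covector (given by coefficients) with a vector. -/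
noncomputable def pair (θ v : Fin 4 → ℝ) : ℝ := ∑ i, θ i * v i

/-- `dI₃ = -2 I₃ θ̃¹ - 8 θ̃² + (I₃²/8 + e^{I₂/2} I₄) θ̃³` where
`I₂ = log F(s) - 4b`, `I₃ = e^{-b} F₁(s) - 8a`, `I₄ = F₂(s)`,
with `F₁ = F'/F` and `F₂ = (F₁' - F₁²/8)/√F`. -/
theorem stmt_4 (F : ℝ → ℝ) (hF : ContDiff ℝ (⊤ : ℕ∞) F) (hFpos : ∀ s, 0 < F s)
    (F₁ F₂ : ℝ → ℝ) (hF₁ : ∀ s, F₁ s = deriv F s / F s)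
    (hF₂ : ∀ s, F₂ s = (deriv F₁ s - (F₁ s) ^ 2 / 8) / Real.sqrt (F s))
    (I₂ I₃ I₄ : (Fin 4 → ℝ) → ℝ)
    (hI₂ : ∀ x, I₂ x = Real.log (F (x 2)) - 4 * x 1)
    (hI₃ : ∀ x, I₃ x = Real.exp (-(x 1)) * F₁ (x 2) - 8 * x 0)
    (hI₄ : ∀ x, I₄ x = F₂ (x 2)) :
    ∀ x v, fderiv ℝ I₃ x v =
      -2 * I₃ x * pair (coframe F x 0) v - 8 * pair (coframe F x 1) v
        + ((I₃ x) ^ 2 / 8 + Real.exp (I₂ x / 2) * I₄ x) * pair (coframe F x 2) v := by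
  have hFdiff : Differentiable ℝ F := hF.differentiable (by simp)
  have hF₁fun : F₁ = fun s => deriv F s / F s := funext hF₁
  have hF₁diff : Differentiable ℝ F₁ := by
    rw [hF₁fun]
    exact ((contDiff_infty_iff_deriv.mp (hF.of_le (by simp))).2.differentiable (by simp)).div hFdiff fun s => (hFpos s).ne'
  have hI₃fun : I₃ = fun x : Fin 4 → ℝ => Real.exp (-(x 1)) * F₁ (x 2) - 8 * x 0 :=
    funext hI₃
  intro x v
  have hp0 : HasFDerivAt (fun x : Fin 4 → ℝ => x 0)
      (ContinuousLinearMap.proj (R := ℝ) (φ := fun _ : Fin 4 => ℝ) 0) x :=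
    (ContinuousLinearMap.proj (R := ℝ) (φ := fun _ : Fin 4 => ℝ) 0).hasFDerivAt
  have hp1 : HasFDerivAt (fun x : Fin 4 → ℝ => x 1)
      (ContinuousLinearMap.proj (R := ℝ) (φ := fun _ : Fin 4 => ℝ) 1) x :=
    (ContinuousLinearMap.proj (R := ℝ) (φ := fun _ : Fin 4 => ℝ) 1).hasFDerivAt
  have hp2 : HasFDerivAt (fun x : Fin 4 → ℝ => x 2)
      (ContinuousLinearMap.proj (R := ℝ) (φ := fun _ : Fin 4 => ℝ) 2) x :=
    (ContinuousLinearMap.proj (R := ℝ) (φ := fun _ : Fin 4 => ℝ) 2).hasFDerivAt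
  have hexp : HasFDerivAt (fun x : Fin 4 → ℝ => Real.exp (-(x 1)))
      (Real.exp (-(x 1)) • -(ContinuousLinearMap.proj (R := ℝ) (φ := fun _ : Fin 4 => ℝ) 1)) x :=
    (Real.hasDerivAt_exp (-(x 1))).comp_hasFDerivAt (f := fun x : Fin 4 → ℝ => -(x 1)) x hp1.neg
  have hF1c : HasFDerivAt (fun x : Fin 4 → ℝ => F₁ (x 2))
      (deriv F₁ (x 2) • ContinuousLinearMap.proj (R := ℝ) (φ := fun _ : Fin 4 => ℝ) 2) x :=
    ((hF₁diff (x 2)).hasDerivAt).comp_hasFDerivAt x hp2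
  have htot : HasFDerivAt (fun x : Fin 4 → ℝ => Real.exp (-(x 1)) * F₁ (x 2) - 8 * x 0) _ x := (hexp.mul hF1c).sub (hp0.const_mul 8)
  have hfd : fderiv ℝ I₃ x v =
      Real.exp (-(x 1)) * (deriv F₁ (x 2) * v 2)
        + F₁ (x 2) * (Real.exp (-(x 1)) * -(v 1)) - 8 * v 0 := by
    rw [hI₃fun, htot.fderiv]
    simp
  rw [hfd, hI₃, hI₂, hI₄, hF₂]
  simp only [pair, coframe, Fin.sum_univ_four]
  have hb : Real.exp (-(x 1)) = (Real.exp (x 1))⁻¹ := Real.exp_neg _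
  have hsq : Real.exp ((Real.log (F (x 2)) - 4 * x 1) / 2)
      = Real.sqrt (F (x 2)) * ((Real.exp (x 1))⁻¹ * (Real.exp (x 1))⁻¹) := by
    rw [show (Real.log (F (x 2)) - 4 * x 1) / 2
        = Real.log (F (x 2)) / 2 + (-(x 1) + -(x 1)) by ring,
      Real.exp_add, Real.exp_add, ← Real.log_sqrt (hFpos (x 2)).le,
      Real.exp_log (Real.sqrt_pos.mpr (hFpos (x 2))), Real.exp_neg]
  rw [hsq, hb]
  have he : Real.exp (x 1) ≠ 0 := (Real.exp_pos _).ne'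
  have hs : Real.sqrt (F (x 2)) ≠ 0 := (Real.sqrt_pos.mpr (hFpos (x 2))).ne'
  simp only [Matrix.cons_val_zero, Matrix.cons_val_one, Matrix.head_cons,
    Matrix.cons_val_two, Matrix.tail_cons, Matrix.cons_val_three]
  field_simp
  ring
end

section
/- Let F : ℝ → ℝ be smooth positive with F₂'(s) ≠ 0 for all s, where F₂ = ((F'/F)' − (F'/F)²/8)/√F. Then the four functions I₁ = e^{−3b} t, I₂ = log F(s) − 4b, I₃ = e^{−b} (F'/F)(s) − 8a, I₄ = F₂(s) on ℝ⁴ (coordinates a,b,s,t) are functionally independent: their differentials dI₁, dI₂, dI₃, dI₄ are linearly independent at every point. -/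
/-- With `F` smooth positive and `F₂' ≠ 0` everywhere, where
`F₂ = ((F'/F)' - (F'/F)²/8)/√F`, the differentials of
`I₁ = e^{-3b} t`, `I₂ = log F(s) - 4b`, `I₃ = e^{-b}(F'/F)(s) - 8a`,
`I₄ = F₂(s)` are linearly independent at every point of `ℝ⁴`
(coordinates `(a,b,s,t) = (x 0, x 1, x 2, x 3)`). -/
theorem stmt_6 (F : ℝ → ℝ) (hF : ContDiff ℝ (⊤ : ℕ∞) F) (hFpos : ∀ s, 0 < F s)
    (F₂ : ℝ → ℝ)
    (hF₂ : ∀ s, F₂ s =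
      (deriv (fun u => deriv F u / F u) s - (deriv F s / F s) ^ 2 / 8) /
        Real.sqrt (F s))
    (hF₂' : ∀ s, deriv F₂ s ≠ 0)
    (I₁ I₂ I₃ I₄ : (Fin 4 → ℝ) → ℝ)
    (hI₁ : ∀ x, I₁ x = Real.exp (-3 * x 1) * x 3)
    (hI₂ : ∀ x, I₂ x = Real.log (F (x 2)) - 4 * x 1)
    (hI₃ : ∀ x, I₃ x = Real.exp (-(x 1)) * (deriv F (x 2) / F (x 2)) - 8 * x 0)
    (hI₄ : ∀ x, I₄ x = F₂ (x 2)) :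
    ∀ x : Fin 4 → ℝ,
      LinearIndependent ℝ
        ![fderiv ℝ I₁ x, fderiv ℝ I₂ x, fderiv ℝ I₃ x, fderiv ℝ I₄ x] := by
  have hI₁' := funext hI₁; have hI₂' := funext hI₂
  have hI₃' := funext hI₃; have hI₄' := funext hI₄
  subst hI₁' hI₂' hI₃' hI₄'
  have hFinf : ContDiff ℝ (⊤:ℕ∞) F := hF.of_le (by simp)
  have hFne : ∀ s, F s ≠ 0 := fun s => (hFpos s).ne'
  -- G = F'/F is smooth
  have hF' : ContDiff ℝ ((⊤:ℕ∞):WithTop ℕ∞) (deriv F) := (contDiff_infty_iff_deriv.mp hFinf).2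
  have hG : ContDiff ℝ ((⊤:ℕ∞):WithTop ℕ∞) (fun s => deriv F s / F s) := hF'.div hFinf hFne
  have hGd : Differentiable ℝ (fun s => deriv F s / F s) := hG.differentiable (by simp)
  have hG' : Differentiable ℝ (deriv (fun s => deriv F s / F s)) :=
    ((contDiff_infty_iff_deriv.mp hG).2).differentiable (by simp)
  -- F₂ is differentiable
  have hF₂fun : F₂ = fun s =>
      (deriv (fun u => deriv F u / F u) s - (deriv F s / F s) ^ 2 / 8) /
        Real.sqrt (F s) := funext hF₂
  have hF₂d : Differentiable ℝ F₂ := by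
    rw [hF₂fun]
    intro s
    exact ((hG'.differentiableAt).sub (((hGd s).pow 2).div_const 8)).div
      (((hFinf.differentiable (by simp) s).sqrt (hFne s)))
      (Real.sqrt_ne_zero'.mpr (hFpos s))
  intro x
  have hproj : ∀ i : Fin 4, HasFDerivAt (fun y : Fin 4 → ℝ => y i)
      (ContinuousLinearMap.proj i : (Fin 4 → ℝ) →L[ℝ] ℝ) x := fun i => by
    exact (ContinuousLinearMap.proj (R := ℝ) (φ := fun _ : Fin 4 => ℝ) i).hasFDerivAt
  -- I₁
  have hb1 := (hproj 1).const_mul (-3 : ℝ)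
  have hexp1 := (Real.hasDerivAt_exp (-3 * x 1)).comp_hasFDerivAt x hb1
  have h1 := hexp1.mul (hproj 3)
  -- I₂
  have hlog : HasDerivAt (fun u => Real.log (F u)) (deriv F (x 2) / F (x 2)) (x 2) :=
    ((hFinf.differentiable (by simp) (x 2)).hasDerivAt).log (hFne (x 2))
  have h2 := (hlog.comp_hasFDerivAt x (hproj 2)).sub ((hproj 1).const_mul 4)
  -- I₃
  have hneg := (hproj 1).neg
  have hexp3 := (Real.hasDerivAt_exp (-(x 1))).comp_hasFDerivAt x hneg
  have hGc := ((hGd (x 2)).hasDerivAt).comp_hasFDerivAt x (hproj 2)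
  have h3 := (hexp3.mul hGc).sub ((hproj 0).const_mul 8)
  -- I₄
  have h4 := ((hF₂d (x 2)).hasDerivAt).comp_hasFDerivAt x (hproj 2)
  simp only [Function.comp_def, Pi.mul_def, Pi.sub_def, Pi.neg_apply] at h1 h2 h3 h4
  rw [h1.fderiv, h2.fderiv, h3.fderiv, h4.fderiv]
  rw [Fintype.linearIndependent_iff]
  intro g hg
  have hv := fun v : Fin 4 → ℝ =>
    congrArg (fun L : (Fin 4 → ℝ) →L[ℝ] ℝ => L v) hg
  simp only [Fin.sum_univ_four, Matrix.cons_val_zero, Matrix.cons_val_one, Matrix.head_cons,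
    Matrix.cons_val_two, Matrix.tail_cons, Matrix.cons_val_three, ContinuousLinearMap.add_apply,
    ContinuousLinearMap.smul_apply, ContinuousLinearMap.sub_apply, ContinuousLinearMap.neg_apply,
    ContinuousLinearMap.proj_apply, ContinuousLinearMap.zero_apply, smul_eq_mul] at hv
  have e3 := hv (Pi.single 3 1)
  have e0 := hv (Pi.single 0 1)
  have e1 := hv (Pi.single 1 1)
  have e2 := hv (Pi.single 2 1)
  simp [Pi.single_apply] at e0 e1 e2 e3
  rw [e0, e3] at e1
  rw [e0] at e2
  simp at e1
  rw [e1] at e2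
  simp [hF₂' (x 2)] at e2
  intro i
  fin_cases i
  · exact e3
  · exact e1
  · exact e0
  · exact e2
end

section
/- Suppose a 4-dimensional manifold is properly CH_k (curvature homogeneous of order k but not locally homogeneous), so that t_q = 0 for q ≤ k and t_{k+1} ≥ 1, and suppose at most one new functionally independent invariant arises at each differentiation (t_{q+1} ≤ t_q + 1) with t_q ≤ 4. Then the Karlhede IC order is at most k + 5 = k + n + 1. -/
/-- Abstract IC-order bound for a properly `CH_k` four-dimensional
manifold (`n = 4`): if the counts `t` of functionally independent
invariants are non-decreasing, vanish through order `k`, grow by at most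
one at each differentiation and are bounded by `4`, while the isotropy
dimensions `d` are non-increasing and trivial from order `k` on, then
the Karlhede stopping condition holds at some step `q ≤ k + 5`;
in particular the IC order is at most `k + n + 1 = k + 5`. -/
theorem stmt_16 (k : ℕ) (t d : ℕ → ℕ) (ht : Monotone t)
    (ht0 : ∀ q ≤ k, t q = 0) (hstep : ∀ q, t (q + 1) ≤ t q + 1)
    (htbd : ∀ q, t q ≤ 4) (hd : Antitone d) (hd0 : ∀ q, k ≤ q → d q = 0) :
    ∃ q : ℕ, 1 ≤ q ∧ q ≤ k + 5 ∧ d q = d (q - 1) ∧ t q = t (q - 1) := by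
  have key : ∃ i < 5, t (k + i + 1) = t (k + i) := by
    by_contra hc
    push_neg at hc
    have grow : ∀ i ≤ 5, i ≤ t (k + i) := by
      intro i hi
      induction i with
      | zero => exact Nat.zero_le _
      | succ j ih =>
        have hj : j < 5 := hi
        have h1 : t (k + j) < t (k + j + 1) :=
          lt_of_le_of_ne (ht (Nat.le_succ _)) (fun h => hc j hj h.symm)
        have := ih (le_of_lt hj)
        show j + 1 ≤ t (k + j + 1)
        omega
    have := grow 5 le_rfl
    have := htbd (k + 5)
    omega
  obtain ⟨i, hi, hti⟩ := key
  refine ⟨k + i + 1, by omega, by omega, ?_, ?_⟩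
  · have h1 : d (k + i + 1) = 0 := hd0 _ (by omega)
    have h2 : d (k + i + 1 - 1) = 0 := hd0 _ (by omega)
    rw [h1, h2]
  · simpa using hti
end
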